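/- For any z, c ∈ ℂ with |c| = 1, |(z^n + c)^n + c| ≤ |c^n + c| + (1 + |z|^n)^n - 1. -/

import Mathlib

/-
Write `(z ^ n + c) ^ n + c = ((z ^ n + c) ^ n - c ^ n) + (c ^ n + c)`. Expanding `(w + c) ^ n` binomially,
every term of `(w + c) ^ n - c ^ n` contains a positive power of `w`, and since `‖c‖ ≤ 1` its norm is at
most the corresponding term of `(1 + ‖w‖) ^ n - 1`. Take `w = z ^ n`.
-/

theorem norm_add_pow_sub_pow_le {R : Type*} [NormedCommRing R] [NormOneClass R] (n : ℕ) (w c : R)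
    (hc : ‖c‖ ≤ 1) : ‖(w + c) ^ n - c ^ n‖ ≤ (1 + ‖w‖) ^ n - 1 := by
  have hR : (w + c) ^ n - c ^ n =
      ∑ k ∈ Finset.range n, w ^ (k + 1) * c ^ (n - (k + 1)) * (n.choose (k + 1) : R) := by
    rw [add_pow, Finset.sum_range_succ', add_sub_assoc]
    simp
  have hℝ : (1 + ‖w‖) ^ n - 1 = ∑ k ∈ Finset.range n, ‖w‖ ^ (k + 1) * (n.choose (k + 1) : ℝ) := by
    rw [add_comm, add_pow, Finset.sum_range_succ', add_sub_assoc]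
    simp
  rw [hR, hℝ]
  refine (norm_sum_le _ _).trans (Finset.sum_le_sum fun k _ => ?_)
  calc ‖w ^ (k + 1) * c ^ (n - (k + 1)) * (n.choose (k + 1) : R)‖
      ≤ ‖w ^ (k + 1)‖ * ‖c ^ (n - (k + 1))‖ * ‖(n.choose (k + 1) : R)‖ := norm_mul₃_le
    _ ≤ ‖w‖ ^ (k + 1) * 1 * (n.choose (k + 1) : ℝ) := by
        gcongr
        · exact norm_pow_le _ _
        · exact (norm_pow_le _ _).trans (pow_le_one₀ (norm_nonneg c) hc)
        · simpa using Nat.norm_cast_le (α := R) _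
    _ = ‖w‖ ^ (k + 1) * (n.choose (k + 1) : ℝ) := by rw [mul_one]

theorem stmt_2_general (n : ℕ) (z c : ℂ) (hc : ‖c‖ = 1) :
    ‖(z ^ n + c) ^ n + c‖ ≤
      ‖c ^ n + c‖ + (1 + ‖z‖ ^ n) ^ n - 1 := by
  have h := norm_add_pow_sub_pow_le n (z ^ n) c hc.le
  rw [norm_pow] at h
  calc ‖(z ^ n + c) ^ n + c‖
      = ‖((z ^ n + c) ^ n - c ^ n) + (c ^ n + c)‖ := by congr 1; ring
    _ ≤ ‖(z ^ n + c) ^ n - c ^ n‖ + ‖c ^ n + c‖ := norm_add_le _ _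
    _ ≤ ‖c ^ n + c‖ + (1 + ‖z‖ ^ n) ^ n - 1 := by linarith

theorem stmt_2 (n : ℕ) (hn : 0 < n) (z c : ℂ) (hc : ‖c‖ = 1) :
    ‖(z ^ n + c) ^ n + c‖ ≤
      ‖c ^ n + c‖ + (1 + ‖z‖ ^ n) ^ n - 1 :=
  stmt_2_general n z c hc
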